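/- Let k be an M-field and F a set of M-polynomials over k in variables X₁,…,Xₙ. Then an M-polynomial f vanishes on all solutions of F = 0 in K^M for every field extension K of k if and only if f lies in the radical of the ideal generated by {σ^m(g) : g ∈ F, m ∈ M}. -/

import Mathlib

/-!
A point of `(K^M)^n` over `ι : k →+* K` is the same as the ring hom `eval₂ ι x` on
`k[M × Fin n]`, and it solves `F = 0` exactly when its kernel contains the `M`-ideal `I`
spanned by all shifts of elements of `F`, because evaluating at the shifted point
`x(ℓ * ·)` commutes with the shift by `ℓ`. Since `I` is stable under shifts, so is its
radical, and primality of the kernel gives the easy direction. Conversely every prime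
`P ⊇ I` is such a kernel: take `K` the residue field of `P` and `x` the images of the
variables; then evaluation at the base point (`ℓ = 1`) is the canonical map to the residue
field, whose kernel is `P`.
-/

open MvPolynomial

namespace MvPolynomial

section Shift

variable {M : Type*} [Monoid M] {k : Type*} [CommSemiring k] {J : Type*}
  (σk : M → k →+* k)

noncomputable def shift (m : M) : MvPolynomial (M × J) k →+* MvPolynomial (M × J) k :=
  (rename fun p : M × J => (m * p.1, p.2)).toRingHom.comp (map (σk m))

lemma shift_apply (m : M) (g : MvPolynomial (M × J) k) :
    shift σk m g = rename (fun p : M × J => (m * p.1, p.2)) (map (σk m) g) := rfl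

lemma eval₂_shift {K : Type*} [CommSemiring K] (ι : k →+* K) (v : M × J → K) (m : M)
    (g : MvPolynomial (M × J) k) :
    eval₂ ι v (shift σk m g) = eval₂ (ι.comp (σk m)) (fun p => v (m * p.1, p.2)) g := by
  rw [shift_apply, eval₂_rename, eval₂_map]
  rfl

lemma shift_one (hone : σk 1 = RingHom.id k) (g : MvPolynomial (M × J) k) :
    shift σk 1 g = g := by
  simp only [shift_apply, hone, map_id, one_mul]
  exact rename_id_apply g

lemma shift_shift (hmul : ∀ m₁ m₂ : M, σk (m₁ * m₂) = (σk m₁).comp (σk m₂))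
    (ℓ m : M) (g : MvPolynomial (M × J) k) :
    shift σk ℓ (shift σk m g) = shift σk (ℓ * m) g := by
  simp only [shift_apply, map_rename, rename_rename, hmul, ← map_map]
  congr 2
  funext p
  simp [mul_assoc]

noncomputable def shiftIdeal (F : Set (MvPolynomial (M × J) k)) :
    Ideal (MvPolynomial (M × J) k) :=
  Ideal.span {q | ∃ g ∈ F, ∃ m : M, q = shift σk m g}

lemma shift_mem_radical_shiftIdeal
    (hmul : ∀ m₁ m₂ : M, σk (m₁ * m₂) = (σk m₁).comp (σk m₂))
    {F : Set (MvPolynomial (M × J) k)} {f : MvPolynomial (M × J) k}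
    (hf : f ∈ (shiftIdeal σk F).radical) (ℓ : M) :
    shift σk ℓ f ∈ (shiftIdeal σk F).radical := by
  have hmap : (shiftIdeal σk F).map (shift σk ℓ) ≤ shiftIdeal σk F := by
    rw [shiftIdeal, Ideal.map_span, Ideal.span_le]
    rintro _ ⟨_, ⟨g, hg, m, rfl⟩, rfl⟩
    exact Ideal.subset_span ⟨g, hg, ℓ * m, shift_shift σk hmul ℓ m g⟩
  exact Ideal.radical_mono hmap (Ideal.map_radical_le _ (Ideal.mem_map_of_mem _ hf))

end Shift

end MvPolynomial

theorem Ideal.mem_radical_of_forall_ringHom_field.{u} {R : Type u} [CommRing R] {I : Ideal R}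
    {f : R} (h : ∀ (K : Type u) [Field K] (φ : R →+* K), I ≤ RingHom.ker φ → φ f = 0) :
    f ∈ I.radical := by
  rw [Ideal.radical_eq_sInf, Submodule.mem_sInf]
  rintro P ⟨hIP, hP⟩
  rw [← Ideal.ker_algebraMap_residueField (I := P)] at hIP ⊢
  exact h _ _ hIP

theorem stmt5.{u} (M : Type u) [Monoid M] (k : Type u) [Field k]
    (σk : M → (k →+* k)) (hone : σk 1 = RingHom.id k)
    (hmul : ∀ m₁ m₂ : M, σk (m₁ * m₂) = (σk m₁).comp (σk m₂))
    (n : ℕ) (F : Set (MvPolynomial (M × Fin n) k)) (f : MvPolynomial (M × Fin n) k) :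
    (∀ (K : Type u) [Field K] (ι : k →+* K), ∀ x : Fin n → M → K,
        (∀ g ∈ F, ∀ ℓ : M,
            MvPolynomial.eval₂ (ι.comp (σk ℓ)) (fun p : M × Fin n => x p.2 (ℓ * p.1)) g = 0) →
        ∀ ℓ : M, MvPolynomial.eval₂ (ι.comp (σk ℓ)) (fun p : M × Fin n => x p.2 (ℓ * p.1)) f = 0)
    ↔ f ∈ (Ideal.span {q : MvPolynomial (M × Fin n) k |
        ∃ g ∈ F, ∃ m : M, q = MvPolynomial.rename (fun p : M × Fin n => (m * p.1, p.2))
          (MvPolynomial.map (σk m) g)}).radical := by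
  change _ ↔ f ∈ (shiftIdeal σk F).radical
  have eval_shift_eq_hom (K : Type u) [Field K] (φ : MvPolynomial (M × Fin n) k →+* K) (ℓ : M)
      (q : MvPolynomial (M × Fin n) k) :
      eval₂ ((φ.comp C).comp (σk ℓ)) (fun p => φ (X (ℓ * p.1, p.2))) q = φ (shift σk ℓ q) := by
    rw [← eval₂_eta (shift σk ℓ q), hom_eval₂, eval₂_shift]
  constructor
  · refine fun h => Ideal.mem_radical_of_forall_ringHom_field fun K _ φ hker => ?_
    have hsol := h K (φ.comp C) (fun j m => φ (X (m, j))) fun g hg ℓ => by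
      rw [eval_shift_eq_hom]
      exact hker (Ideal.subset_span ⟨g, hg, ℓ, rfl⟩)
    simpa only [eval_shift_eq_hom, shift_one σk hone] using hsol 1
  · intro hf K _ ι x hx ℓ
    let E := eval₂Hom ι fun p : M × Fin n => x p.2 p.1
    have hker : shiftIdeal σk F ≤ RingHom.ker E := by
      rw [shiftIdeal, Ideal.span_le]
      rintro _ ⟨g, hg, m, rfl⟩
      exact (eval₂_shift σk ι _ m g).trans (hx g hg m)
    have hshift : shift σk ℓ f ∈ RingHom.ker E := (RingHom.ker_isPrime E).radical_le_iff.2 hker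
      (shift_mem_radical_shiftIdeal σk hmul hf ℓ)
    exact (eval₂_shift σk ι _ ℓ f).symm.trans hshift
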